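/- arXiv:2404.18242 — 3 statements merged into one kernel-verified Lean document; each statement's English description precedes it below -/
import Mathlib

section
/- Under Assumptions (A1) and (A3), define for ε, δ > 0 and t ≥ 0: 𝒮₂^{ε,δ}(t) := ∫₀ᵗ ( (1/ε)·κ'(x(π_δ(s)))·κ(x(π_δ(s)))·(s − π_δ(s)) − (δ/(2ε))·κ'(x(s))·κ(x(s)) )·E(s,t) ds. Then for every integer p ≥ 1 there exists a constant C > 0, independent of t, ε and δ, such that |𝒮₂^{ε,δ}(t)|^p ≤ C·δ^{2p}/ε^p for all ε, δ ∈ (0,1) and all t ≥ 0. -/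
/-!
Write `g = κ'κ ∘ x` and `E(s) = E(s,t)`. Up to the factor `1/ε` the integrand is
`(s - π_δ s - δ/2) g(π_δ s) E(s) + (δ/2) (g(π_δ s) - g(s)) E(s)`.
The second term is `O(δ) E(s)` because `g` is Lipschitz along the trajectory. The first is
`(gψ)' E` off the lattice `δℤ`, where `ψ(s) = (s - π_δ s)(s - π_δ s - δ)/2` is continuous,
vanishes on `δℤ` and is bounded by `δ²/8`; integrating by parts, with `∂ₛE = -(f' + κ')E`,
leaves `O(δ²)` as well. Both bounds use `∫₀ᵗ E ≤ C_*`, and both need the trajectory to stay in a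
fixed ball: by the one-sided Lipschitz condition on `f` and the boundedness of `κ`, the field
`f + κ` points inwards on every large enough sphere.
-/

open MeasureTheory Set Filter Real Topology
open scoped NNReal Interval

/-- The sampling map `π_δ(t) = δ·⌊t/δ⌋`. -/
noncomputable def piD (δ t : ℝ) : ℝ := δ * (⌊t / δ⌋ : ℤ)

section Sampling

variable {δ : ℝ} {g : ℝ → ℝ}

lemma sub_piD_eq_mul_fract (hδ : 0 < δ) (s : ℝ) : s - piD δ s = δ * Int.fract (s / δ) := by
  rw [piD, Int.fract, mul_sub, mul_div_cancel₀ s hδ.ne']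

lemma piD_le (hδ : 0 < δ) (s : ℝ) : piD δ s ≤ s := by
  have := sub_piD_eq_mul_fract hδ s
  nlinarith [Int.fract_nonneg (s / δ)]

lemma lt_piD_add (hδ : 0 < δ) (s : ℝ) : s < piD δ s + δ := by
  have := sub_piD_eq_mul_fract hδ s
  nlinarith [Int.fract_lt_one (s / δ)]

lemma piD_nonneg (hδ : 0 < δ) {s : ℝ} (hs : 0 ≤ s) : 0 ≤ piD δ s :=
  mul_nonneg hδ.le (by exact_mod_cast Int.floor_nonneg.mpr (div_nonneg hs hδ.le))

lemma abs_piD_sub_le (hδ : 0 < δ) (s : ℝ) : |piD δ s - s| ≤ δ := by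
  rw [abs_sub_comm, abs_of_nonneg (sub_nonneg.2 (piD_le hδ s))]
  linarith [lt_piD_add hδ s]

lemma piD_zero : piD δ 0 = 0 := by simp [piD]

lemma measurable_comp_piD (g : ℝ → ℝ) : Measurable fun s => g (piD δ s) :=
  (measurable_from_top (f := fun k : ℤ => g (δ * k))).comp (measurable_id.div_const δ).floor

lemma piD_eventuallyEq (hδ : 0 < δ) {s : ℝ} (h : piD δ s ≠ s) :
    piD δ =ᶠ[𝓝 s] fun _ => piD δ s := by
  filter_upwards [Ioo_mem_nhds ((piD_le hδ s).lt_of_ne h) (lt_piD_add hδ s)] with u hu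
  simp only [piD] at hu
  have hk : ⌊u / δ⌋ = ⌊s / δ⌋ := by
    rw [Int.floor_eq_iff, le_div_iff₀ hδ, div_lt_iff₀ hδ]
    constructor <;> linarith [hu.1, hu.2]
  simp only [piD, hk]

/-- The primitive of the sawtooth `s - π_δ s - δ/2` vanishing on the lattice `δℤ`. -/
noncomputable def sawtoothPrimitive (δ s : ℝ) : ℝ := (s - piD δ s) * (s - piD δ s - δ) / 2

lemma continuous_sawtoothPrimitive (hδ : 0 < δ) : Continuous (sawtoothPrimitive δ) := by
  have h : sawtoothPrimitive δ =
      fun s => δ ^ 2 / 2 * (Int.fract (s / δ) * (Int.fract (s / δ) - 1)) := by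
    funext s
    rw [sawtoothPrimitive, sub_piD_eq_mul_fract hδ]
    ring
  rw [h]
  exact ContinuousOn.comp_fract (f := fun _ u => δ ^ 2 / 2 * (u * (u - 1)))
    (by fun_prop) (continuous_id.div_const δ) (by simp)

lemma abs_sawtoothPrimitive_le (hδ : 0 < δ) (s : ℝ) : |sawtoothPrimitive δ s| ≤ δ ^ 2 / 8 := by
  have h1 := piD_le hδ s
  have h2 := lt_piD_add hδ s
  rw [sawtoothPrimitive, abs_of_nonpos (by nlinarith)]
  nlinarith [sq_nonneg (δ - 2 * (s - piD δ s))]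

lemma sawtoothPrimitive_of_piD_eq {s : ℝ} (h : piD δ s = s) : sawtoothPrimitive δ s = 0 := by
  simp [sawtoothPrimitive, h]

lemma hasDerivAt_comp_piD_mul_sawtoothPrimitive (hδ : 0 < δ) {s : ℝ} (h : piD δ s ≠ s) :
    HasDerivAt (fun u => g (piD δ u) * sawtoothPrimitive δ u)
      (g (piD δ s) * (s - piD δ s - δ / 2)) s := by
  have hpoly : HasDerivAt (fun u => g (piD δ s) * ((u - piD δ s) * (u - piD δ s - δ) / 2))
      (g (piD δ s) * (s - piD δ s - δ / 2)) s := by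
    have := (((hasDerivAt_id s).sub_const (piD δ s)).mul
      (((hasDerivAt_id s).sub_const (piD δ s)).sub_const δ)).div_const 2
    exact (this.congr_deriv (by simp only [id]; ring)).const_mul _
  refine hpoly.congr_of_eventuallyEq ?_
  filter_upwards [piD_eventuallyEq hδ h] with u hu
  simp only [sawtoothPrimitive, hu]

lemma continuousOn_comp_piD_mul_sawtoothPrimitive (hδ : 0 < δ) {C : ℝ}
    (hg : ∀ u, 0 ≤ u → |g u| ≤ C) :
    ContinuousOn (fun u => g (piD δ u) * sawtoothPrimitive δ u) (Ici 0) := by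
  intro s hs
  by_cases h : piD δ s = s
  · -- at a lattice point `ψ` vanishes, and it kills the bounded jump of `g ∘ π_δ`
    have hψ : Tendsto (sawtoothPrimitive δ) (𝓝[Ici 0] s) (𝓝 0) := by
      rw [← sawtoothPrimitive_of_piD_eq h]
      exact (continuous_sawtoothPrimitive hδ).continuousWithinAt
    have hbdd : IsBoundedUnder (· ≤ ·) (𝓝[Ici 0] s) (fun u => ‖g (piD δ u)‖) :=
      ⟨C, eventually_map.2 (eventually_nhdsWithin_of_forall fun u hu =>
        hg _ (piD_nonneg hδ hu))⟩
    simpa [ContinuousWithinAt, sawtoothPrimitive_of_piD_eq h]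
      using isBoundedUnder_le_mul_tendsto_zero hbdd hψ
  · refine ContinuousAt.continuousWithinAt ?_
    have hconst : ContinuousAt (fun u => g (piD δ s) * sawtoothPrimitive δ u) s :=
      ((continuous_sawtoothPrimitive hδ).const_mul _).continuousAt
    refine hconst.congr ?_
    filter_upwards [piD_eventuallyEq hδ h] with u hu
    rw [hu]

end Sampling

lemma IntervalIntegrable.mul_of_abs_le {φ E : ℝ → ℝ} {a b C : ℝ}
    (hE : IntervalIntegrable E volume a b) (hφ : AEStronglyMeasurable φ (volume.restrict (Ι a b)))
    (hC : ∀ s ∈ Ι a b, |φ s| ≤ C) : IntervalIntegrable (fun s => φ s * E s) volume a b := by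
  rw [intervalIntegrable_iff] at hE ⊢
  exact hE.bdd_mul hφ ((ae_restrict_iff' measurableSet_uIoc).2 (ae_of_all _ hC))

section SamplingError

variable {g A E : ℝ → ℝ} {δ t : ℝ}

lemma intervalIntegrable_comp_piD_mul_sawtooth_mul {C : ℝ} (hδ : 0 < δ) (ht : 0 ≤ t)
    (hg : ∀ u, 0 ≤ u → |g u| ≤ C) (hE : IntervalIntegrable E volume 0 t) :
    IntervalIntegrable (fun s => g (piD δ s) * (s - piD δ s - δ / 2) * E s) volume 0 t := by
  refine hE.mul_of_abs_le (C := C * δ) (((measurable_comp_piD g).mul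
    ((measurable_id.sub (measurable_comp_piD id)).sub_const _)).aestronglyMeasurable) ?_
  intro s hs
  rw [uIoc_of_le ht] at hs
  have h1 := piD_le hδ s
  have h2 := lt_piD_add hδ s
  rw [abs_mul]
  exact mul_le_mul (hg _ (piD_nonneg hδ hs.1.le)) (abs_le.2 ⟨by linarith, by linarith⟩)
    (abs_nonneg _) ((abs_nonneg _).trans (hg 0 le_rfl))

/-- Integrating by parts against `ψ = sawtoothPrimitive δ` (zero at `0`, of size `δ²/8`) gains
a factor `δ` over the trivial bound. -/
lemma abs_integral_comp_piD_mul_sawtooth_mul_le {E' : ℝ → ℝ} {C : ℝ} (hδ : 0 < δ) (ht : 0 ≤ t)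
    (hg : ∀ u, 0 ≤ u → |g u| ≤ C) (hE : ContinuousOn E (Icc 0 t))
    (hE' : ∀ s ∈ Ioo 0 t, HasDerivAt E (E' s) s) (hE'i : IntervalIntegrable E' volume 0 t) :
    |∫ s in (0:ℝ)..t, g (piD δ s) * (s - piD δ s - δ / 2) * E s|
      ≤ C * δ ^ 2 / 8 * (|E t| + ∫ s in (0:ℝ)..t, |E' s|) := by
  set H : ℝ → ℝ := fun u => g (piD δ u) * sawtoothPrimitive δ u
  have hHc : ContinuousOn H (Icc 0 t) :=
    (continuousOn_comp_piD_mul_sawtoothPrimitive hδ hg).mono Icc_subset_Ici_self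
  have hHb : ∀ u, 0 ≤ u → |H u| ≤ C * δ ^ 2 / 8 := fun u hu => by
    rw [abs_mul, mul_div_assoc]
    exact mul_le_mul (hg _ (piD_nonneg hδ hu)) (abs_sawtoothPrimitive_le hδ u) (abs_nonneg _)
      ((abs_nonneg _).trans (hg 0 le_rfl))
  have hHb' : ∀ s ∈ Ι 0 t, |H s| ≤ C * δ ^ 2 / 8 := fun s hs =>
    hHb s (by rw [uIoc_of_le ht] at hs; exact hs.1.le)
  have hi1 :=
    intervalIntegrable_comp_piD_mul_sawtooth_mul hδ ht hg (hE.intervalIntegrable_of_Icc ht)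
  have hi2 : IntervalIntegrable (fun s => H s * E' s) volume 0 t := by
    refine hE'i.mul_of_abs_le ?_ hHb'
    rw [uIoc_of_le ht]
    exact (hHc.mono Ioc_subset_Icc_self).aestronglyMeasurable measurableSet_Ioc
  have hparts : ∫ s in (0:ℝ)..t, g (piD δ s) * (s - piD δ s - δ / 2) * E s + H s * E' s
      = H t * E t - H 0 * E 0 := by
    refine integral_eq_of_hasDerivAt_off_countable_of_le (fun s => H s * E s) _ ht
      (countable_range fun k : ℤ => δ * k) (hHc.mul hE) (fun s hs => ?_) (hi1.add hi2)
    have hlat : piD δ s ≠ s := fun h => hs.2 ⟨_, h⟩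
    exact (hasDerivAt_comp_piD_mul_sawtoothPrimitive hδ hlat).mul (hE' s hs.1)
  have hH0 : H 0 = 0 := by simp [H, sawtoothPrimitive_of_piD_eq piD_zero]
  rw [intervalIntegral.integral_add hi1 hi2, hH0, zero_mul, sub_zero, ← eq_sub_iff_add_eq] at hparts
  have hrem : |∫ s in (0:ℝ)..t, H s * E' s| ≤ ∫ s in (0:ℝ)..t, C * δ ^ 2 / 8 * |E' s| := by
    rw [← Real.norm_eq_abs]
    refine intervalIntegral.norm_integral_le_of_norm_le ht (ae_of_all _ fun s hs => ?_)
      (hE'i.abs.const_mul _)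
    rw [Real.norm_eq_abs, abs_mul]
    exact mul_le_mul_of_nonneg_right (hHb s hs.1.le) (abs_nonneg _)
  rw [intervalIntegral.integral_const_mul] at hrem
  rw [hparts]
  calc |H t * E t - ∫ s in (0:ℝ)..t, H s * E' s|
      ≤ |H t| * |E t| + |∫ s in (0:ℝ)..t, H s * E' s| := by
        rw [← abs_mul]; exact abs_sub _ _
    _ ≤ C * δ ^ 2 / 8 * |E t| + C * δ ^ 2 / 8 * ∫ s in (0:ℝ)..t, |E' s| := by
        gcongr
        exact hHb t ht
    _ = _ := by ring

lemma LipschitzOnWith.abs_comp_piD_sub_le {L : ℝ≥0} (hg : LipschitzOnWith L g (Ici 0))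
    (hδ : 0 < δ) {s : ℝ} (hs : 0 ≤ s) : |g (piD δ s) - g s| ≤ L * δ := by
  have := hg.dist_le_mul _ (piD_nonneg hδ hs) _ hs
  rw [Real.dist_eq, Real.dist_eq] at this
  exact this.trans (mul_le_mul_of_nonneg_left (abs_piD_sub_le hδ s) L.coe_nonneg)

lemma abs_integral_comp_piD_sub_mul_le {L : ℝ≥0} (hδ : 0 < δ) (ht : 0 ≤ t)
    (hg : LipschitzOnWith L g (Ici 0)) (hE0 : ∀ s ∈ Ioc 0 t, 0 ≤ E s)
    (hE : IntervalIntegrable E volume 0 t) :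
    |∫ s in (0:ℝ)..t, (g (piD δ s) - g s) * E s| ≤ L * δ * ∫ s in (0:ℝ)..t, E s := by
  rw [← intervalIntegral.integral_const_mul, ← Real.norm_eq_abs]
  refine intervalIntegral.norm_integral_le_of_norm_le ht (ae_of_all _ fun s hs => ?_)
    (hE.const_mul _)
  rw [Real.norm_eq_abs, abs_mul, abs_of_nonneg (hE0 s hs)]
  exact mul_le_mul_of_nonneg_right (hg.abs_comp_piD_sub_le hδ hs.1.le) (hE0 s hs)

lemma continuousOn_exp_integral_left (ht : 0 ≤ t) (hA : ContinuousOn A (Icc 0 t)) :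
    ContinuousOn (fun s => exp (∫ u in s..t, A u)) (Icc 0 t) := by
  have := intervalIntegral.continuousOn_primitive_interval_left
    ((hA.integrableOn_Icc (μ := volume)).mono_set (uIcc_of_le ht).subset)
  rw [uIcc_of_le ht] at this
  exact continuous_exp.comp_continuousOn this

lemma hasDerivAt_exp_integral_left (hA : ContinuousOn A (Icc 0 t)) {s : ℝ} (hs : s ∈ Ioo 0 t) :
    HasDerivAt (fun u => exp (∫ v in u..t, A v)) (-A s * exp (∫ v in s..t, A v)) s := by
  have hint : IntervalIntegrable A volume s t :=
    (hA.mono (Icc_subset_Icc hs.1.le le_rfl)).intervalIntegrable_of_Icc hs.2.le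
  have := (intervalIntegral.integral_hasDerivAt_left hint
    ((hA.mono Ioo_subset_Icc_self).stronglyMeasurableAtFilter isOpen_Ioo s hs)
    (hA.continuousAt (Icc_mem_nhds hs.1 hs.2))).exp
  exact this.congr_deriv (mul_comm _ _)

/-- The sampling error `𝒮₂^{ε,δ}(t)` with the factor `1/ε` taken out, for a general coefficient
`g` (`κ'κ` along the trajectory) and rate `A` (`f' + κ'` along the trajectory). -/
lemma abs_integral_sampling_error_le {Cg M Cstar : ℝ} {L : ℝ≥0} (hδ : 0 < δ) (ht : 0 ≤ t)
    (hA : ContinuousOn A (Ici 0)) (hAM : ∀ u, 0 ≤ u → |A u| ≤ M)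
    (hgC : ∀ u, 0 ≤ u → |g u| ≤ Cg) (hgL : LipschitzOnWith L g (Ici 0))
    (hE : ∫ s in (0:ℝ)..t, exp (∫ u in s..t, A u) ≤ Cstar) :
    |∫ s in (0:ℝ)..t, (g (piD δ s) * (s - piD δ s) - δ / 2 * g s) * exp (∫ u in s..t, A u)|
      ≤ (Cg * (1 + M * Cstar) / 8 + L * Cstar / 2) * δ ^ 2 := by
  set E : ℝ → ℝ := fun s => exp (∫ u in s..t, A u)
  have hAc : ContinuousOn A (Icc 0 t) := hA.mono Icc_subset_Ici_self
  have hEc : ContinuousOn E (Icc 0 t) := continuousOn_exp_integral_left ht hAc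
  have hEi : IntervalIntegrable E volume 0 t := hEc.intervalIntegrable_of_Icc ht
  have hM : 0 ≤ M := (abs_nonneg _).trans (hAM 0 le_rfl)
  have hCg : 0 ≤ Cg := (abs_nonneg _).trans (hgC 0 le_rfl)
  have hsaw := abs_integral_comp_piD_mul_sawtooth_mul_le hδ ht hgC hEc
    (fun s hs => hasDerivAt_exp_integral_left hAc hs)
    ((hAc.neg.mul hEc).intervalIntegrable_of_Icc ht)
  have hEt : E t = 1 := by simp [E]
  have hdrift : ∫ s in (0:ℝ)..t, |-A s * E s| ≤ M * Cstar := by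
    calc ∫ s in (0:ℝ)..t, |-A s * E s| ≤ ∫ s in (0:ℝ)..t, M * E s := by
          refine intervalIntegral.integral_mono_on ht
            ((hAc.neg.mul hEc).abs.intervalIntegrable_of_Icc ht) (hEi.const_mul M) fun s hs => ?_
          rw [abs_mul, abs_neg, abs_of_pos (exp_pos _)]
          exact mul_le_mul_of_nonneg_right (hAM s hs.1) (exp_pos _).le
      _ ≤ M * Cstar := by
          rw [intervalIntegral.integral_const_mul]
          exact mul_le_mul_of_nonneg_left hE hM
  have hlip := abs_integral_comp_piD_sub_mul_le hδ ht hgL (fun s _ => (exp_pos _).le) hEi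
  have hsplit : ∫ s in (0:ℝ)..t, (g (piD δ s) * (s - piD δ s) - δ / 2 * g s) * E s
      = (∫ s in (0:ℝ)..t, g (piD δ s) * (s - piD δ s - δ / 2) * E s)
        + δ / 2 * ∫ s in (0:ℝ)..t, (g (piD δ s) - g s) * E s := by
    rw [← intervalIntegral.integral_const_mul, ← intervalIntegral.integral_add
      (intervalIntegrable_comp_piD_mul_sawtooth_mul hδ ht hgC hEi) ?_]
    · exact intervalIntegral.integral_congr fun s _ => by ring
    · refine IntervalIntegrable.const_mul (hEi.mul_of_abs_le (C := L * δ) ?_ fun s hs => ?_) _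
      · rw [uIoc_of_le ht]
        exact (measurable_comp_piD g).aestronglyMeasurable.sub
          ((hgL.continuousOn.mono fun s hs => hs.1.le).aestronglyMeasurable measurableSet_Ioc)
      · rw [uIoc_of_le ht] at hs
        exact hgL.abs_comp_piD_sub_le hδ hs.1.le
  rw [hEt, abs_one] at hsaw
  rw [hsplit]
  calc _ ≤ |∫ s in (0:ℝ)..t, g (piD δ s) * (s - piD δ s - δ / 2) * E s|
        + δ / 2 * |∫ s in (0:ℝ)..t, (g (piD δ s) - g s) * E s| :=
        (abs_add_le _ _).trans_eq (by rw [abs_mul, abs_of_pos (half_pos hδ)])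
    _ ≤ Cg * δ ^ 2 / 8 * (1 + M * Cstar) + δ / 2 * (L * δ * Cstar) := by
        gcongr
        · exact hsaw.trans (by gcongr)
        · exact hlip.trans (by gcongr)
    _ = _ := by ring

end SamplingError

section Dissipative

variable {F x : ℝ → ℝ} {x₀ R : ℝ}

lemma continuousOn_Icc_of_eq_add_integral
    (hx : ∀ t, 0 ≤ t → x t = x₀ + ∫ s in (0:ℝ)..t, F (x s)) {T : ℝ} (hT : 0 ≤ T)
    (hi : IntervalIntegrable (fun s => F (x s)) volume 0 T) : ContinuousOn x (Icc 0 T) := by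
  have := intervalIntegral.continuousOn_primitive_interval
    ((intervalIntegrable_iff_integrableOn_Icc_of_le hT).1 hi |>.mono_set (uIcc_of_le hT).subset)
  rw [uIcc_of_le hT] at this
  exact (continuousOn_const.add this).congr fun u hu => hx u hu.1

lemma abs_le_on_Icc_of_eq_add_integral (hF : Continuous F)
    (hdiss : ∀ z, |z| = R → z * F z < 0) (hx0 : |x₀| ≤ R)
    (hx : ∀ t, 0 ≤ t → x t = x₀ + ∫ s in (0:ℝ)..t, F (x s)) {T : ℝ} (hT : 0 ≤ T)
    (hi : IntervalIntegrable (fun s => F (x s)) volume 0 T) : ∀ s ∈ Icc 0 T, |x s| ≤ R := by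
  have hxc := continuousOn_Icc_of_eq_add_integral hx hT hi
  have hGc : ContinuousOn (fun s => F (x s)) (Icc 0 T) := hF.comp_continuousOn hxc
  have hderiv : ∀ b ∈ Ico 0 T, HasDerivWithinAt x (F (x b)) (Ici b) b := by
    intro b hb
    have hmem : Icc 0 T ∈ 𝓝[Ioi b] b :=
      mem_nhdsWithin.2 ⟨Iio T, isOpen_Iio, hb.2, fun u hu => ⟨hb.1.trans hu.2.le, hu.1.le⟩⟩
    have hint : IntervalIntegrable (fun s => F (x s)) volume 0 b :=
      hi.mono_set (by rw [uIcc_of_le hb.1, uIcc_of_le hT]; exact Icc_subset_Icc le_rfl hb.2.le)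
    have := intervalIntegral.integral_hasDerivWithinAt_right (s := Ici b) (t := Ioi b) hint
      ((hGc.stronglyMeasurableAtFilter_nhdsWithin measurableSet_Icc b).filter_mono
        (nhdsWithin_le_of_mem hmem))
      ((hGc b (Ico_subset_Icc_self hb)).mono_of_mem_nhdsWithin hmem)
    exact (this.const_add x₀).congr (fun u hu => hx u (hb.1.trans hu)) (hx b hb.1)
  -- `x²` cannot cross `R²`, since there its derivative `2 x F(x)` is negative
  have hsq := image_le_of_deriv_right_lt_deriv_boundary (f := fun s => x s ^ 2)
    (B := fun _ => R ^ 2) (B' := fun _ => 0) (hxc.pow 2) (fun b hb => (hderiv b hb).pow 2)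
    (by simpa [hx 0 le_rfl, sq_abs] using pow_le_pow_left₀ (abs_nonneg _) hx0 2)
    (fun _ => hasDerivAt_const _ _) (fun b _ hb => ?_)
  · intro s hs
    have hR : 0 ≤ R := (abs_nonneg _).trans hx0
    exact abs_le_of_sq_le_sq' (hsq hs) hR |> abs_le.2
  · have : |x b| = R := by
      rw [← abs_of_nonneg ((abs_nonneg _).trans hx0), ← sq_eq_sq_iff_abs_eq_abs]
      exact hb
    have := hdiss _ this
    simp only [Nat.cast_ofNat, pow_one, Nat.add_one_sub_one]
    linarith

/-- At the first time `T` where `F ∘ x` fails to be integrable, the a priori bound makes `F ∘ x`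
bounded before `T`, while after `T` the junk value `0` of the integral freezes `x` at `x₀`; so
`F ∘ x` is integrable past `T` after all. -/
lemma intervalIntegrable_of_eq_add_integral (hF : Continuous F)
    (hdiss : ∀ z, |z| = R → z * F z < 0) (hx0 : |x₀| ≤ R)
    (hx : ∀ t, 0 ≤ t → x t = x₀ + ∫ s in (0:ℝ)..t, F (x s)) :
    ∀ t, 0 ≤ t → IntervalIntegrable (fun s => F (x s)) volume 0 t := by
  set G : ℝ → ℝ := fun s => F (x s)
  by_contra! ⟨t₀, ht₀, hbad₀⟩
  set N : Set ℝ := {t | 0 ≤ t ∧ ¬ IntervalIntegrable G volume 0 t}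
  have hNne : N.Nonempty := ⟨t₀, ht₀, hbad₀⟩
  have hNbdd : BddBelow N := ⟨0, fun u hu => hu.1⟩
  set T := sInf N
  have hT0 : 0 ≤ T := le_csInf hNne fun u hu => hu.1
  have hgood : ∀ u, 0 ≤ u → u < T → IntervalIntegrable G volume 0 u := fun u hu huT => by
    by_contra hbadu
    exact (csInf_le hNbdd ⟨hu, hbadu⟩).not_gt huT
  have hbad : ∀ u, T < u → ¬ IntervalIntegrable G volume 0 u := fun u hTu hi => by
    obtain ⟨v, ⟨hv0, hvbad⟩, hvu⟩ := (csInf_lt_iff hNbdd hNne).1 hTu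
    exact hvbad (hi.mono_set (by
      rw [uIcc_of_le hv0, uIcc_of_le (hv0.trans hvu.le)]; exact Icc_subset_Icc le_rfl hvu.le))
  have hbefore : ∀ s ∈ Ico 0 T, ContinuousWithinAt x (Ico 0 T) s ∧ |x s| ≤ R := by
    intro s hs
    set u := (s + T) / 2 with hu
    have hsu : s < u := by linarith [hs.2]
    have hu0 : 0 ≤ u := hs.1.trans hsu.le
    have hiu := hgood u hu0 (by linarith [hs.2])
    refine ⟨?_, abs_le_on_Icc_of_eq_add_integral hF hdiss hx0 hx hu0 hiu s ⟨hs.1, hsu.le⟩⟩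
    refine (continuousOn_Icc_of_eq_add_integral hx hu0 hiu s ⟨hs.1, hsu.le⟩).mono_of_mem_nhdsWithin
      (mem_nhdsWithin.2 ⟨Iio u, isOpen_Iio, hsu, fun v hv => ⟨hv.2.1, hv.1.le⟩⟩)
  obtain ⟨C, hC⟩ := isCompact_Icc.exists_bound_of_continuousOn (hF.continuousOn (s := Icc (-R) R))
  have hi₁ : IntervalIntegrable G volume 0 T := by
    rw [intervalIntegrable_iff_integrableOn_Icc_of_le hT0, integrableOn_Icc_iff_integrableOn_Ico]
    refine (integrableOn_const (C := C) measure_Ico_lt_top.ne).mono'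
      ((hF.comp_continuousOn fun s hs => (hbefore s hs).1).aestronglyMeasurable measurableSet_Ico)
      ((ae_restrict_iff' measurableSet_Ico).2 (ae_of_all _ fun s hs => ?_))
    exact hC _ (abs_le.1 (hbefore s hs).2)
  have hi₂ : IntervalIntegrable G volume T (T + 1) := by
    rw [intervalIntegrable_iff_integrableOn_Ioc_of_le (by linarith)]
    refine (integrableOn_const (C := F x₀) measure_Ioc_lt_top.ne).congr_fun (fun u hu => ?_)
      measurableSet_Ioc
    simp only [G, hx u (hT0.trans hu.1.le), intervalIntegral.integral_undef (hbad u hu.1),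
      add_zero]
  exact hbad (T + 1) (by linarith) (hi₁.trans hi₂)

lemma abs_le_of_eq_add_integral (hF : Continuous F)
    (hdiss : ∀ z, |z| = R → z * F z < 0) (hx0 : |x₀| ≤ R)
    (hx : ∀ t, 0 ≤ t → x t = x₀ + ∫ s in (0:ℝ)..t, F (x s)) : ∀ t, 0 ≤ t → |x t| ≤ R :=
  fun t ht => abs_le_on_Icc_of_eq_add_integral hF hdiss hx0 hx ht
    (intervalIntegrable_of_eq_add_integral hF hdiss hx0 hx t ht) t ⟨ht, le_rfl⟩

lemma exists_lipschitzOnWith_of_eq_add_integral (hF : Continuous F)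
    (hdiss : ∀ z, |z| = R → z * F z < 0) (hx0 : |x₀| ≤ R)
    (hx : ∀ t, 0 ≤ t → x t = x₀ + ∫ s in (0:ℝ)..t, F (x s)) :
    ∃ L, LipschitzOnWith L x (Ici 0) := by
  obtain ⟨C, hC⟩ := isCompact_Icc.exists_bound_of_continuousOn (hF.continuousOn (s := Icc (-R) R))
  have hint := intervalIntegrable_of_eq_add_integral hF hdiss hx0 hx
  refine ⟨_, LipschitzOnWith.of_dist_le' (K := C) fun u hu v hv => ?_⟩
  rw [Real.dist_eq, Real.dist_eq, hx u hu, hx v hv, add_sub_add_left_eq_sub,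
    intervalIntegral.integral_interval_sub_left (hint u hu) (hint v hv), ← Real.norm_eq_abs]
  refine intervalIntegral.norm_integral_le_of_norm_le_const fun s hs => hC _ (abs_le.1 ?_)
  refine abs_le_of_eq_add_integral hF hdiss hx0 hx s ?_
  rcases le_total u v with h | h
  · rw [uIoc_of_ge h] at hs; exact hu.trans hs.1.le
  · rw [uIoc_of_le h] at hs; exact hv.trans hs.1.le

end Dissipative

lemma mul_add_lt_zero_of_dissipative {f κ : ℝ → ℝ} {lam γ : ℝ} (hlam : 0 < lam)
    (hcontr : ∀ a b : ℝ, (a - b) * (f a - f b) ≤ -lam * (a - b) ^ 2)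
    (hκbd : ∀ a : ℝ, |κ a| ≤ γ) {z : ℝ} (hz : (|f 0| + γ) / lam < |z|) :
    z * (f z + κ z) < 0 := by
  have h1 : z * (f z - f 0) ≤ -lam * |z| ^ 2 := by simpa [sq_abs] using hcontr z 0
  have h2 : z * f 0 ≤ |z| * |f 0| := by rw [← abs_mul]; exact le_abs_self _
  have h3 : z * κ z ≤ |z| * γ := (le_abs_self _).trans
    (by rw [abs_mul]; exact mul_le_mul_of_nonneg_left (hκbd z) (abs_nonneg _))
  have hγ : 0 ≤ γ := (abs_nonneg _).trans (hκbd 0)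
  have hz0 : 0 < |z| := lt_of_le_of_lt (by positivity) hz
  rw [div_lt_iff₀ hlam] at hz
  nlinarith

lemma exists_lipschitzOnWith_deriv_mul {κ : ℝ → ℝ} {K a b : ℝ} (hκd : Differentiable ℝ κ)
    (hκd2 : Differentiable ℝ (deriv κ)) (hK : ∀ y ∈ Icc a b, |deriv (deriv κ) y| ≤ K) :
    ∃ L, LipschitzOnWith L (fun y => deriv κ y * κ y) (Icc a b) := by
  obtain ⟨B₀, hB₀⟩ := (isCompact_Icc (a := a) (b := b)).exists_bound_of_continuousOn
    hκd.continuous.continuousOn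
  obtain ⟨B₁, hB₁⟩ := (isCompact_Icc (a := a) (b := b)).exists_bound_of_continuousOn
    hκd2.continuous.continuousOn
  have hderiv : ∀ y ∈ Icc a b, ‖deriv (fun y => deriv κ y * κ y) y‖ ≤ K * B₀ + B₁ * B₁ := by
    intro y hy
    rw [deriv_fun_mul (hκd2 y) (hκd y), Real.norm_eq_abs]
    refine (abs_add_le _ _).trans (add_le_add ?_ ?_) <;> rw [abs_mul]
    · exact mul_le_mul (hK y hy) (hB₀ y hy) (abs_nonneg _) ((abs_nonneg _).trans (hK y hy))
    · exact mul_le_mul (hB₁ y hy) (hB₁ y hy) (abs_nonneg _) ((norm_nonneg _).trans (hB₁ y hy))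
  refine ⟨_, LipschitzOnWith.of_dist_le' (K := K * B₀ + B₁ * B₁) fun u hu v hv => ?_⟩
  rw [dist_eq_norm, dist_eq_norm]
  exact (convex_Icc a b).norm_image_sub_le_of_norm_deriv_le
    (fun y _ => (hκd2 y).mul (hκd y)) hderiv hv hu

lemma exists_abs_integral_sampling_error_le {x a h : ℝ → ℝ} {R Cstar : ℝ} {Lx Lh : ℝ≥0}
    (hxR : ∀ t, 0 ≤ t → |x t| ≤ R) (hxL : LipschitzOnWith Lx x (Ici 0)) (ha : Continuous a)
    (hhL : LipschitzOnWith Lh h (Icc (-R) R))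
    (hE : ∀ t, 0 ≤ t → ∫ s in (0:ℝ)..t, exp (∫ u in s..t, a (x u)) ≤ Cstar) :
    ∃ C, ∀ δ t, 0 < δ → 0 ≤ t →
      |∫ s in (0:ℝ)..t, (h (x (piD δ s)) * (s - piD δ s) - δ / 2 * h (x s)) *
        exp (∫ u in s..t, a (x u))| ≤ C * δ ^ 2 := by
  obtain ⟨M, hM⟩ := isCompact_Icc.exists_bound_of_continuousOn (ha.continuousOn (s := Icc (-R) R))
  obtain ⟨Cg, hCg⟩ := isCompact_Icc.exists_bound_of_continuousOn hhL.continuousOn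
  have hmaps : MapsTo x (Ici 0) (Icc (-R) R) := fun t ht => abs_le.1 (hxR t ht)
  exact ⟨_, fun δ t hδ ht => abs_integral_sampling_error_le (g := h ∘ x) (A := a ∘ x) hδ ht
    (ha.comp_continuousOn hxL.continuousOn) (fun u hu => hM _ (hmaps hu))
    (fun u hu => hCg _ (hmaps hu)) (hhL.comp hxL hmaps) (hE t ht)⟩

theorem stmt10_general
    (f κ : ℝ → ℝ) (x₀ : ℝ) (x : ℝ → ℝ)
    -- Assumption (A1)
    (lam γ : ℝ)
    (hlam : 0 < lam)
    (hcontr : ∀ a b : ℝ, (a - b) * (f a - f b) ≤ -lam * (a - b) ^ 2)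
    (hκbd : ∀ a : ℝ, |κ a| ≤ γ)
    -- Assumption (A3)
    (hfd : Differentiable ℝ f) (hfd2 : Differentiable ℝ (deriv f))
    (hκd : Differentiable ℝ κ) (hκd2 : Differentiable ℝ (deriv κ))
    (K : ℝ) (hK : ∀ y : ℝ, |deriv (deriv κ) y| ≤ K)
    (Cstar : ℝ)
    (hint : ∀ m : ℕ, (m = 1 ∨ m = 2) → ∀ t : ℝ, 0 ≤ t →
      (∫ s in (0:ℝ)..t,
        Real.exp ((m : ℝ) * ∫ u in s..t, (deriv f (x u) + deriv κ (x u)))) ≤ Cstar)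
    -- the closed-loop ODE `dx/dt = f(x) + κ(x)`, `x(0) = x₀`
    (hx : ∀ t : ℝ, 0 ≤ t → x t = x₀ + ∫ s in (0:ℝ)..t, (f (x s) + κ (x s)))
    :
    ∀ p : ℕ, 1 ≤ p → ∃ C : ℝ, 0 < C ∧
      ∀ ε δ : ℝ, 0 < ε → ε < 1 → 0 < δ → δ < 1 → ∀ t : ℝ, 0 ≤ t →
      |∫ s in (0:ℝ)..t,
          ((1 / ε) * deriv κ (x (piD δ s)) * κ (x (piD δ s)) * (s - piD δ s)
            - (δ / (2 * ε)) * deriv κ (x s) * κ (x s)) *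
            Real.exp (∫ u in s..t, (deriv f (x u) + deriv κ (x u)))| ^ p
        ≤ C * δ ^ (2 * p) / ε ^ p := by
  intro p _
  set R := max |x₀| ((|f 0| + γ) / lam + 1)
  have hx0 : |x₀| ≤ R := le_max_left _ _
  have hF : Continuous fun y => f y + κ y := hfd.continuous.add hκd.continuous
  have hdiss : ∀ z, |z| = R → z * (f z + κ z) < 0 := fun z hz =>
    mul_add_lt_zero_of_dissipative hlam hcontr hκbd
      (hz ▸ (lt_add_one _).trans_le (le_max_right _ _))
  obtain ⟨Lx, hxL⟩ := exists_lipschitzOnWith_of_eq_add_integral hF hdiss hx0 hx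
  obtain ⟨Lh, hhL⟩ := exists_lipschitzOnWith_deriv_mul (a := -R) (b := R) hκd hκd2 fun y _ => hK y
  obtain ⟨C, hC⟩ := exists_abs_integral_sampling_error_le
    (abs_le_of_eq_add_integral hF hdiss hx0 hx) hxL (hfd2.continuous.add hκd2.continuous) hhL
    fun t ht => by simpa using hint 1 (Or.inl rfl) t ht
  refine ⟨max C 1 ^ p, by positivity, fun ε δ hε _ hδ _ t ht => ?_⟩
  have hfactor : (∫ s in (0:ℝ)..t,
      ((1 / ε) * deriv κ (x (piD δ s)) * κ (x (piD δ s)) * (s - piD δ s)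
        - (δ / (2 * ε)) * deriv κ (x s) * κ (x s)) *
        Real.exp (∫ u in s..t, (deriv f (x u) + deriv κ (x u))))
      = 1 / ε * ∫ s in (0:ℝ)..t,
        (deriv κ (x (piD δ s)) * κ (x (piD δ s)) * (s - piD δ s)
          - δ / 2 * (deriv κ (x s) * κ (x s))) *
          Real.exp (∫ u in s..t, (deriv f (x u) + deriv κ (x u))) := by
    rw [← intervalIntegral.integral_const_mul]
    exact intervalIntegral.integral_congr fun s _ => by ring
  rw [hfactor, abs_mul, abs_of_pos (one_div_pos.2 hε)]
  calc _ ≤ (1 / ε * (max C 1 * δ ^ 2)) ^ p := by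
        gcongr
        exact (hC δ t hδ ht).trans (by gcongr; exact le_max_left _ _)
    _ = max C 1 ^ p * δ ^ (2 * p) / ε ^ p := by
        rw [mul_pow, mul_pow, pow_mul, one_div_pow, one_div_mul_eq_div]

/-- Uniform-in-time bound `|𝒮₂^{ε,δ}(t)|^p ≤ C·δ^{2p}/ε^p` where
`𝒮₂^{ε,δ}(t) = ∫₀ᵗ ((1/ε)·κ'(x(π_δ(s)))·κ(x(π_δ(s)))·(s − π_δ(s))
− (δ/(2ε))·κ'(x(s))·κ(x(s)))·E(s,t) ds`. -/
theorem stmt10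
    (f κ : ℝ → ℝ) (x₀ : ℝ) (x : ℝ → ℝ)
    -- Assumption (A1)
    (lam ξ μ Lκ γ : ℝ) (q : ℕ)
    (hlam : 0 < lam) (hξ : 0 < ξ) (hμ : 0 < μ) (hLκ : 0 < Lκ) (hγ : 0 < γ)
    (hcontr : ∀ a b : ℝ, (a - b) * (f a - f b) ≤ -lam * (a - b) ^ 2)
    (hfLip : ∀ a b : ℝ, |f a - f b| ≤ (ξ * (|a| ^ q + |b| ^ q) + μ) * |a - b|)
    (hκLip : ∀ a b : ℝ, |κ a - κ b| ≤ Lκ * |a - b|)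
    (hgap : lam / 2 - Lκ > 0)
    (hκbd : ∀ a : ℝ, |κ a| ≤ γ)
    -- Assumption (A3)
    (hfd : Differentiable ℝ f) (hfd2 : Differentiable ℝ (deriv f))
    (hκd : Differentiable ℝ κ) (hκd2 : Differentiable ℝ (deriv κ))
    (K : ℝ) (hK : ∀ y : ℝ, |deriv (deriv κ) y| ≤ K)
    (cf : ℝ) (rf : ℕ) (hf2 : ∀ y : ℝ, |deriv (deriv f) y| ≤ cf * (1 + |y| ^ rf))
    (Cstar : ℝ) (hCstar : 0 < Cstar)
    (hint : ∀ m : ℕ, (m = 1 ∨ m = 2) → ∀ t : ℝ, 0 ≤ t →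
      (∫ s in (0:ℝ)..t,
        Real.exp ((m : ℝ) * ∫ u in s..t, (deriv f (x u) + deriv κ (x u)))) ≤ Cstar)
    -- the closed-loop ODE `dx/dt = f(x) + κ(x)`, `x(0) = x₀`
    (hx : ∀ t : ℝ, 0 ≤ t → x t = x₀ + ∫ s in (0:ℝ)..t, (f (x s) + κ (x s)))
    :
    ∀ p : ℕ, 1 ≤ p → ∃ C : ℝ, 0 < C ∧
      ∀ ε δ : ℝ, 0 < ε → ε < 1 → 0 < δ → δ < 1 → ∀ t : ℝ, 0 ≤ t →
      |∫ s in (0:ℝ)..t,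
          ((1 / ε) * deriv κ (x (piD δ s)) * κ (x (piD δ s)) * (s - piD δ s)
            - (δ / (2 * ε)) * deriv κ (x s) * κ (x s)) *
            Real.exp (∫ u in s..t, (deriv f (x u) + deriv κ (x u)))| ^ p
        ≤ C * δ ^ (2 * p) / ε ^ p :=
  stmt10_general f κ x₀ x lam γ hlam hcontr hκbd hfd hfd2 hκd hκd2 K hK Cstar hint hx
end

section
/- Let g : [0,∞) → ℝ be measurable with |g(u)| ≤ K for all u ≥ 0 (for some K > 0), and let δ > 0 and t ≥ 0. Then Σ_{i=0}^{⌊t/δ⌋−1} ∫_{iδ}^{(i+1)δ} ( ∫_s^{(i+1)δ} exp(∫_u^t g(r) dr) du ) ds ≤ δ·e^{Kδ}·∫₀ᵗ exp(∫_s^t g(r) dr) ds. -/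
/-- For a measurable function `g` on `[0,∞)` bounded by `K`, the sampled
double integral of `exp(∫ᵤᵗ g)` is bounded by `δ·e^{Kδ}·∫₀ᵗ exp(∫ₛᵗ g)`. -/
theorem stmt11 (g : ℝ → ℝ) (hmeas : Measurable g) (K : ℝ) (hK : 0 < K)
    (hbd : ∀ u : ℝ, 0 ≤ u → |g u| ≤ K)
    (δ : ℝ) (hδ : 0 < δ) (t : ℝ) (ht : 0 ≤ t) :
    (∑ i ∈ Finset.range (⌊t / δ⌋).toNat,
        ∫ s in ((i : ℝ) * δ)..(((i : ℝ) + 1) * δ),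
          ∫ u in s..(((i : ℝ) + 1) * δ), Real.exp (∫ r in u..t, g r))
      ≤ δ * Real.exp (K * δ) * ∫ s in (0:ℝ)..t, Real.exp (∫ r in s..t, g r) := by
  set N := (⌊t / δ⌋).toNat with hN
  -- replace g by an everywhere-bounded version
  set G : ℝ → ℝ := fun r => if 0 ≤ r then g r else 0 with hG
  have hGmeas : Measurable G := hmeas.ite measurableSet_Ici measurable_const
  have hGbd : ∀ r, |G r| ≤ K := by
    intro r
    by_cases h : 0 ≤ r
    · simpa [hG, h] using hbd r h
    · simp [hG, h, hK.le]
  have hGint : ∀ a b : ℝ, IntervalIntegrable G MeasureTheory.volume a b := by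
    intro a b
    refine (intervalIntegrable_const (c := K)).mono_fun
      hGmeas.aestronglyMeasurable ?_
    filter_upwards with x
    simpa [abs_of_pos hK] using hGbd x
  set F : ℝ → ℝ := fun u => ∫ r in u..t, G r with hF
  have hFcont : Continuous F := by
    have h1 : Continuous fun u => ∫ r in (0:ℝ)..u, G r :=
      intervalIntegral.continuous_primitive hGint 0
    have h2 : ∀ u, F u = (∫ r in (0:ℝ)..t, G r) - ∫ r in (0:ℝ)..u, G r := by
      intro u
      have h3 := intervalIntegral.integral_add_adjacent_intervals (hGint u 0) (hGint 0 t)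
      have h4 : (∫ r in u..(0:ℝ), G r) = -∫ r in (0:ℝ)..u, G r :=
        intervalIntegral.integral_symm 0 u
      simp only [hF]
      linarith
    simp only [funext h2]
    exact continuous_const.sub h1
  have hexpF : Continuous fun u => Real.exp (F u) := Real.continuous_exp.comp hFcont
  -- F agrees with original integrand for u ≥ 0
  have hFeq : ∀ u : ℝ, 0 ≤ u → (∫ r in u..t, g r) = F u := by
    intro u hu
    apply intervalIntegral.integral_congr
    intro r hr
    have : 0 ≤ r := le_trans (by simpa [inf_le_iff] using (le_min hu ht).trans hr.1) le_rfl
    simp [hG, this]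
  -- key exponential comparison
  have hkey : ∀ s u : ℝ, s ≤ u → u ≤ s + δ →
      Real.exp (F u) ≤ Real.exp (K * δ) * Real.exp (F s) := by
    intro s u hsu husd
    have hsplit : (∫ r in s..u, G r) + F u = F s :=
      intervalIntegral.integral_add_adjacent_intervals (hGint s u) (hGint u t)
    have hb : |∫ r in s..u, G r| ≤ K * δ := by
      have := intervalIntegral.norm_integral_le_of_norm_le_const
        (a := s) (b := u) (C := K) (f := G)
        (fun x _ => by simpa using hGbd x)
      calc |∫ r in s..u, G r| ≤ K * |u - s| := by simpa using this
        _ ≤ K * δ := by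
          apply mul_le_mul_of_nonneg_left _ hK.le
          rw [abs_of_nonneg (by linarith)]; linarith
    have : F u = F s - ∫ r in s..u, G r := by linarith
    rw [this, ← Real.exp_add] at *
    apply Real.exp_le_exp.2
    have := abs_le.1 hb
    linarith
  have hNdle : (N : ℝ) * δ ≤ t := by
    have h1 : ((⌊t / δ⌋ : ℤ) : ℝ) ≤ t / δ := Int.floor_le _
    have h2 : (0 : ℤ) ≤ ⌊t / δ⌋ := Int.floor_nonneg.2 (div_nonneg ht hδ.le)
    have h3 : (N : ℝ) = ((⌊t / δ⌋ : ℤ) : ℝ) := by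
      rw [hN]; exact_mod_cast Int.toNat_of_nonneg h2
    rw [h3]
    calc ((⌊t / δ⌋ : ℤ) : ℝ) * δ ≤ (t / δ) * δ := by nlinarith
      _ = t := by field_simp
  -- per-term bound
  have hterm : ∀ i ∈ Finset.range N,
      (∫ s in ((i : ℝ) * δ)..(((i : ℝ) + 1) * δ),
          ∫ u in s..(((i : ℝ) + 1) * δ), Real.exp (∫ r in u..t, g r))
      ≤ ∫ s in ((i : ℝ) * δ)..(((i : ℝ) + 1) * δ),
          δ * Real.exp (K * δ) * Real.exp (F s) := by
    intro i hi
    set a : ℝ := (i : ℝ) * δ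
    set b : ℝ := ((i : ℝ) + 1) * δ
    have ha0 : 0 ≤ a := mul_nonneg (Nat.cast_nonneg i) hδ.le
    have hab : a ≤ b := by dsimp [a, b]; nlinarith
    have hba : b = a + δ := by dsimp [a, b]; ring
    -- the inner integrand rewritten with F
    have hinner : ∀ s ∈ Set.Icc a b,
        (∫ u in s..b, Real.exp (∫ r in u..t, g r)) = ∫ u in s..b, Real.exp (F u) := by
      intro s hs
      apply intervalIntegral.integral_congr
      intro u hu
      have hu0 : 0 ≤ u := by
        have h1 : min s b ≤ u := hu.1
        have : 0 ≤ min s b := le_min (le_trans ha0 hs.1) (le_trans ha0 hab)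
        linarith
      simp only [hFeq u hu0]
    have hstep : ∀ s ∈ Set.Icc a b,
        (∫ u in s..b, Real.exp (F u)) ≤ δ * Real.exp (K * δ) * Real.exp (F s) := by
      intro s hs
      have hsb : s ≤ b := hs.2
      have hpt : ∀ u ∈ Set.Icc s b, Real.exp (F u) ≤ Real.exp (K * δ) * Real.exp (F s) := by
        intro u hu
        exact hkey s u hu.1 (by rw [hba] at hu; linarith [hu.2, hs.1])
      calc (∫ u in s..b, Real.exp (F u))
          ≤ ∫ u in s..b, Real.exp (K * δ) * Real.exp (F s) := by
            apply intervalIntegral.integral_mono_on hsb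
              (hexpF.intervalIntegrable s b) (intervalIntegrable_const) hpt
        _ = (b - s) * (Real.exp (K * δ) * Real.exp (F s)) := by
            rw [intervalIntegral.integral_const, smul_eq_mul]
        _ ≤ δ * (Real.exp (K * δ) * Real.exp (F s)) := by
            apply mul_le_mul_of_nonneg_right _ (by positivity)
            rw [hba] at *; linarith [hs.1]
        _ = δ * Real.exp (K * δ) * Real.exp (F s) := by ring
    -- integrability of LHS inner function on [a,b]
    have hLHScont : Continuous fun s => ∫ u in s..b, Real.exp (F u) := by
      have : Continuous fun s => ∫ u in b..s, Real.exp (F u) :=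
        intervalIntegral.continuous_primitive
          (fun x y => hexpF.intervalIntegrable x y) b
      have heq : ∀ s, (∫ u in s..b, Real.exp (F u)) = -∫ u in b..s, Real.exp (F u) := by
        intro s; rw [intervalIntegral.integral_symm]
      simp only [funext heq]
      exact this.neg
    have hcongr : (∫ s in a..b, ∫ u in s..b, Real.exp (∫ r in u..t, g r))
        = ∫ s in a..b, ∫ u in s..b, Real.exp (F u) := by
      apply intervalIntegral.integral_congr
      intro s hs
      rw [Set.uIcc_of_le hab] at hs
      exact hinner s hs
    rw [hcongr]
    apply intervalIntegral.integral_mono_on hab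
      (hLHScont.intervalIntegrable a b)
      ((continuous_const.mul hexpF).intervalIntegrable a b)
    intro s hs
    exact hstep s hs
  calc (∑ i ∈ Finset.range N,
        ∫ s in ((i : ℝ) * δ)..(((i : ℝ) + 1) * δ),
          ∫ u in s..(((i : ℝ) + 1) * δ), Real.exp (∫ r in u..t, g r))
      ≤ ∑ i ∈ Finset.range N,
        ∫ s in ((i : ℝ) * δ)..(((i : ℝ) + 1) * δ),
          δ * Real.exp (K * δ) * Real.exp (F s) := Finset.sum_le_sum hterm
    _ = ∫ s in (0:ℝ)..((N : ℝ) * δ), δ * Real.exp (K * δ) * Real.exp (F s) := by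
        have := intervalIntegral.sum_integral_adjacent_intervals
          (f := fun s => δ * Real.exp (K * δ) * Real.exp (F s))
          (μ := MeasureTheory.volume) (a := fun k : ℕ => (k : ℝ) * δ) (n := N)
          (fun k _ => (continuous_const.mul hexpF).intervalIntegrable _ _)
        simp only [Nat.cast_zero, zero_mul] at this
        rw [← this]
        apply Finset.sum_congr rfl
        intro i _
        norm_num
    _ = δ * Real.exp (K * δ) * ∫ s in (0:ℝ)..((N : ℝ) * δ), Real.exp (F s) := by
        rw [← intervalIntegral.integral_const_mul]
    _ ≤ δ * Real.exp (K * δ) * ∫ s in (0:ℝ)..t, Real.exp (F s) := by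
        apply mul_le_mul_of_nonneg_left _ (by positivity)
        have hsplit : (∫ s in (0:ℝ)..((N:ℝ)*δ), Real.exp (F s))
            + ∫ s in ((N:ℝ)*δ)..t, Real.exp (F s) = ∫ s in (0:ℝ)..t, Real.exp (F s) :=
          intervalIntegral.integral_add_adjacent_intervals
            (hexpF.intervalIntegrable _ _) (hexpF.intervalIntegrable _ _)
        have hpos : 0 ≤ ∫ s in ((N:ℝ)*δ)..t, Real.exp (F s) :=
          intervalIntegral.integral_nonneg hNdle (fun u _ => (Real.exp_pos _).le)
        linarith
    _ = δ * Real.exp (K * δ) * ∫ s in (0:ℝ)..t, Real.exp (∫ r in s..t, g r) := by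
        congr 1
        apply intervalIntegral.integral_congr
        intro s hs
        rw [Set.uIcc_of_le ht] at hs
        simp only [hFeq s hs.1]
end

section
/- Let f, κ : ℝ → ℝ and α, β, γ > 0 be such that x·f(x) ≤ −α·x² + β for all x ∈ ℝ and |κ(x)| ≤ γ for all x ∈ ℝ. Let x₀ ∈ ℝ and for δ > 0 let x^δ : [0,∞) → ℝ satisfy x^δ(t) = x₀ + ∫₀ᵗ (f(x^δ(s)) + κ(x^δ(π_δ(s)))) ds for all t ≥ 0. Then for every integer p ≥ 1 there exists a constant C > 0, independent of t and δ, such that |x^δ(t)|^p ≤ C for all t ≥ 0 and all δ > 0. -/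
open MeasureTheory Set

lemma key13 (y g : ℝ → ℝ) (R M : ℝ) (hRM : R ≤ M)
    (hy0 : y 0 ≤ M)
    (hy : ∀ u : ℝ, 0 ≤ u → y u = y 0 + ∫ s in (0:ℝ)..u, g s)
    (hg : ∀ u : ℝ, 0 ≤ u → R ≤ y u → g u ≤ 0)
    (t : ℝ) (ht : 0 ≤ t) (hint : IntervalIntegrable g volume 0 t) :
    y t ≤ M := by
  by_contra hlt
  push_neg at hlt
  have hcont : ContinuousOn y (Icc 0 t) := by
    have h1 : ContinuousOn (fun u => y 0 + ∫ s in (0:ℝ)..u, g s) (Icc 0 t) := by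
      have h2 := (continuousOn_const (c := y 0)).add
        (intervalIntegral.continuousOn_primitive_interval' hint Set.left_mem_uIcc)
      rwa [Set.uIcc_of_le ht] at h2
    exact ContinuousOn.congr h1 (fun u hu => hy u hu.1)
  set S := {u : ℝ | u ∈ Icc 0 t ∧ y u ≤ M} with hS
  have h0S : (0:ℝ) ∈ S := ⟨⟨le_refl _, ht⟩, hy0⟩
  have hSne : S.Nonempty := ⟨0, h0S⟩
  have hbdd : BddAbove S := ⟨t, fun u hu => hu.1.2⟩
  have hSclosed : IsClosed S := by
    have h := hcont.preimage_isClosed_of_isClosed isClosed_Icc (isClosed_Iic (a := M))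
    have he : S = Icc 0 t ∩ y ⁻¹' (Iic M) :=
      Set.ext fun u => ⟨fun hu => ⟨hu.1, hu.2⟩, fun hu => ⟨hu.1, hu.2⟩⟩
    rw [he]; exact h
  set a := sSup S with ha
  have haS : a ∈ S := hSclosed.csSup_mem hSne hbdd
  have ha0 : 0 ≤ a := haS.1.1
  have hat : a ≤ t := haS.1.2
  have hgt : ∀ u ∈ Ioc a t, M < y u := by
    intro u hu
    by_contra h
    push_neg at h
    have : u ∈ S := ⟨⟨le_trans ha0 hu.1.le, hu.2⟩, h⟩
    exact absurd (le_csSup hbdd this) (not_le.2 hu.1)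
  have hi1 : IntervalIntegrable g volume 0 a :=
    hint.mono_set (by rw [Set.uIcc_of_le ha0, Set.uIcc_of_le ht]; exact Icc_subset_Icc le_rfl hat)
  have hi2 : IntervalIntegrable g volume a t :=
    hint.mono_set (by rw [Set.uIcc_of_le hat, Set.uIcc_of_le ht]; exact Icc_subset_Icc ha0 le_rfl)
  have hsplit : (∫ s in (0:ℝ)..a, g s) + ∫ s in a..t, g s = ∫ s in (0:ℝ)..t, g s :=
    intervalIntegral.integral_add_adjacent_intervals hi1 hi2
  have hneg : (∫ s in a..t, g s) ≤ 0 := by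
    rw [intervalIntegral.integral_of_le hat]
    refine setIntegral_nonpos measurableSet_Ioc ?_
    intro u hu
    exact hg u (le_trans ha0 hu.1.le) (le_trans hRM (hgt u hu).le)
  have hyt : y t = y a + ∫ s in a..t, g s := by
    rw [hy t ht, hy a ha0, ← hsplit]; ring
  have : y t ≤ M := by
    rw [hyt]
    calc y a + ∫ s in a..t, g s ≤ y a + 0 := by linarith
    _ ≤ M := by simpa using haS.2
  linarith


/-- Uniform-in-time moment bound for the sampled-data closed-loop
trajectory `x^δ` under dissipativity of `f` and boundedness of `κ`. -/
theorem stmt13 (f κ : ℝ → ℝ) (α β γ : ℝ) (hα : 0 < α) (hβ : 0 < β) (hγ : 0 < γ)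
    (hdiss : ∀ y : ℝ, y * f y ≤ -α * y ^ 2 + β)
    (hκbd : ∀ y : ℝ, |κ y| ≤ γ)
    (x₀ : ℝ)
    -- the sampled-data closed-loop system
    (xd : ℝ → ℝ → ℝ)
    (hxd : ∀ δ : ℝ, 0 < δ → ∀ t : ℝ, 0 ≤ t →
      xd δ t = x₀ + ∫ s in (0:ℝ)..t, (f (xd δ s) + κ (xd δ (piD δ s))))
    :
    ∀ p : ℕ, 1 ≤ p → ∃ C : ℝ, 0 < C ∧
      ∀ t : ℝ, 0 ≤ t → ∀ δ : ℝ, 0 < δ → |xd δ t| ^ p ≤ C := by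

  intro p hp
  set R : ℝ := max 1 ((β + γ) / α) with hR
  have hR1 : (1:ℝ) ≤ R := le_max_left _ _
  have hRα : β + γ ≤ α * R := by
    have h2 : (β + γ) / α ≤ R := le_max_right _ _
    calc β + γ = α * ((β + γ) / α) := by field_simp
    _ ≤ α * R := by nlinarith
  set M : ℝ := max |x₀| R with hM
  have hM1 : (1:ℝ) ≤ M := le_trans hR1 (le_max_right _ _)
  have hRM : R ≤ M := le_max_right _ _
  have hx₀M : |x₀| ≤ M := le_max_left _ _
  refine ⟨M ^ p, by positivity, ?_⟩
  intro t ht δ hδ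
  have hy0 : xd δ 0 = x₀ := by
    have := hxd δ hδ 0 le_rfl
    simpa using this
  set g : ℝ → ℝ := fun s => f (xd δ s) + κ (xd δ (piD δ s)) with hg
  have hyeq : ∀ u : ℝ, 0 ≤ u → xd δ u = xd δ 0 + ∫ s in (0:ℝ)..u, g s := by
    intro u hu
    rw [hy0]
    exact hxd δ hδ u hu
  have habs : |xd δ t| ≤ M := by
    by_cases hint : IntervalIntegrable g volume 0 t
    · have hpos : xd δ t ≤ M := by
        refine key13 (xd δ) g R M hRM ?_ hyeq ?_ t ht hint
        · rw [hy0]; linarith [le_abs_self x₀]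
        intro u _ hRu
        set y := xd δ u with hy
        have hdu := hdiss y
        have hκu : κ (xd δ (piD δ u)) ≤ γ := (abs_le.1 (hκbd _)).2
        have h1 : 1 ≤ y := le_trans hR1 hRu
        have key : y * g u ≤ 0 := by
          have hexp : y * g u = y * f y + y * κ (xd δ (piD δ u)) := by
            simp only [hg]; ring
          rw [hexp]
          nlinarith [hdu,
            mul_le_mul_of_nonneg_left hκu (by linarith : (0:ℝ) ≤ y),
            mul_nonneg hα.le (mul_nonneg (sub_nonneg.2 hRu) (by linarith : (0:ℝ) ≤ y)),
            mul_nonneg (sub_nonneg.2 h1) (sub_nonneg.2 hRα),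
            mul_nonneg hβ.le (sub_nonneg.2 h1)]
        by_contra hgpos
        push_neg at hgpos
        exact absurd (mul_pos (by linarith : (0:ℝ) < y) hgpos) (not_lt.2 key)
      have hneg : -(xd δ t) ≤ M := by
        refine key13 (fun u => -(xd δ u)) (fun u => -(g u)) R M hRM ?_ ?_ ?_ t ht hint.neg
        · simp only [hy0]; linarith [neg_abs_le x₀]
        · intro u hu
          rw [hyeq u hu, intervalIntegral.integral_neg]
          ring
        · intro u _ hRu
          set y := xd δ u with hy
          have hdu := hdiss y
          have hκu : -γ ≤ κ (xd δ (piD δ u)) := (abs_le.1 (hκbd _)).1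
          have h1 : y ≤ -1 := by linarith
          have key : y * g u ≤ 0 := by
            have hexp : y * g u = y * f y + y * κ (xd δ (piD δ u)) := by
              simp only [hg]; ring
            rw [hexp]
            nlinarith [hdu,
              mul_le_mul_of_nonpos_left hκu (by linarith : y ≤ (0:ℝ)),
              mul_nonneg hα.le (mul_nonneg (sub_nonneg.2 hRu) (by linarith : (0:ℝ) ≤ -y)),
              mul_nonneg (sub_nonneg.2 (by linarith : (1:ℝ) ≤ -y)) (sub_nonneg.2 hRα),
              mul_nonneg hβ.le (sub_nonneg.2 (by linarith : (1:ℝ) ≤ -y))]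
          rw [neg_nonpos]
          by_contra hgneg
          push_neg at hgneg
          exact absurd (mul_pos_of_neg_of_neg (by linarith : y < 0) hgneg) (not_lt.2 key)
      exact abs_le.2 ⟨by linarith, hpos⟩
    · rw [hyeq t ht, hy0, intervalIntegral.integral_undef hint, add_zero]
      exact hx₀M
  exact pow_le_pow_left₀ (abs_nonneg _) habs p
end
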